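/- Let M be a compact oriented smooth d-manifold (or more generally a space satisfying Poincaré duality with finitely generated integral cohomology). If the cup-product pairing H^k(M, ℤ/n) × H^{d−k}(M, ℤ/n) → ℤ/n is non-degenerate for every n ≥ 1, and all integral cohomology groups of M are finitely generated, then the pairing H^k(M, ℤ) × H^{d−k}(M, ℚ/ℤ) → ℚ/ℤ is non-degenerate on the left: for every nonzero α ∈ H^k(M, ℤ) there exists β ∈ H^{d−k}(M, ℚ/ℤ) with α ⌣ β ≠ 0. -/
import Mathlib


lemma exists_not_dvd {A : Type*} [AddCommGroup A] (hA : AddGroup.FG A)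
    (α : A) (hα : α ≠ 0) : ∃ n : ℕ, 1 ≤ n ∧ ∀ b : A, α ≠ n • b := by
  obtain ⟨m, ι, fι, q, hq, ex, ⟨f⟩⟩ := AddCommGroup.equiv_free_prod_directSum_zmod A
  haveI : ∀ i, NeZero (q i ^ ex i) := fun i =>
    ⟨pow_ne_zero _ (hq i).pos.ne'⟩
  by_cases h1 : (f α).1 = 0
  · -- torsion case
    have h2 : (f α).2 ≠ 0 := by
      intro h2
      apply hα
      have : f α = 0 := Prod.ext h1 h2
      simpa using f.injective (by simpa using this)
    haveI : Finite (DirectSum ι fun i => ZMod (q i ^ ex i)) :=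
      Finite.of_equiv _ DFinsupp.equivFunOnFintype.symm
    refine ⟨Nat.card (DirectSum ι fun i => ZMod (q i ^ ex i)), Nat.card_pos, fun b hb => ?_⟩
    apply h2
    have := congrArg (fun x => (f x).2) hb
    simp only [map_nsmul, Prod.smul_snd] at this
    rw [this, card_nsmul_eq_zero']
  · obtain ⟨j, hj⟩ : ∃ j, (f α).1 j ≠ 0 := by
      by_contra h; push_neg at h; exact h1 (Finsupp.ext h)
    refine ⟨((f α).1 j).natAbs + 1, le_add_self, fun b hb => ?_⟩
    have h5 := congrArg (fun x => (f x).1 j) hb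
    simp only [map_nsmul, Prod.smul_fst, Finsupp.smul_apply] at h5
    have hdvd : ((((f α).1 j).natAbs + 1 : ℕ) : ℤ) ∣ (f α).1 j := by
      conv_rhs => rw [h5, nsmul_eq_mul]
      exact dvd_mul_right _ _
    have h6 := Int.le_of_dvd (abs_pos.mpr hj) ((dvd_abs _ _).mpr hdvd)
    rw [Int.abs_eq_natAbs] at h6
    omega

/-- Half of Proposition 5.7 of Benoist–Ottem, abstracted. `A` plays the role
of `H^k(M,ℤ)` (finitely generated), `An n` of `H^k(M,ℤ/n)`, `Bn n` of
`H^{d−k}(M,ℤ/n)`, `Binf` of `H^{d−k}(M,ℚ/ℤ)`, `r n` is reduction mod `n` (whose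
kernel consists of classes divisible by `n`), `p n` the non-degenerate mod `n`
cup-product pairing, `ι n` the coefficient map `ℤ/n → ℚ/ℤ` on cohomology,
`e n : ℤ/n ↪ ℚ/ℤ`, and `P` the `ℤ × ℚ/ℤ` pairing, compatible with the mod `n`
ones. Conclusion: `P` is non-degenerate on the left. -/
theorem stmt_7
    (A : Type*) [AddCommGroup A] (hA : AddGroup.FG A)
    (An Bn : ℕ → Type*) [∀ n, AddCommGroup (An n)] [∀ n, AddCommGroup (Bn n)]
    (Binf : Type*) [AddCommGroup Binf]
    (r : ∀ n, A →+ An n)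
    (hr : ∀ n, 1 ≤ n → ∀ a : A, r n a = 0 → ∃ b : A, a = n • b)
    (p : ∀ n, An n →+ Bn n →+ ZMod n)
    (hp : ∀ n, 1 ≤ n → ∀ x : An n, x ≠ 0 → ∃ y : Bn n, p n x y ≠ 0)
    (ι : ∀ n, Bn n →+ Binf)
    (e : ∀ n, ZMod n →+ AddCircle (1 : ℚ))
    (he : ∀ n, 1 ≤ n → Function.Injective (e n))
    (P : A →+ Binf →+ AddCircle (1 : ℚ))
    (hcomp : ∀ (n : ℕ) (a : A) (y : Bn n), P a (ι n y) = e n (p n (r n a) y))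
    (α : A) (hα : α ≠ 0) :
    ∃ β : Binf, P α β ≠ 0 := by
  obtain ⟨n, hn1, hn2⟩ := exists_not_dvd hA α hα
  have hrn : r n α ≠ 0 := fun h => by
    obtain ⟨b, hb⟩ := hr n hn1 α h
    exact hn2 b hb
  obtain ⟨y, hy⟩ := hp n hn1 (r n α) hrn
  refine ⟨ι n y, ?_⟩
  rw [hcomp]
  intro h
  exact hy (he n hn1 (by rw [h, map_zero]))
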